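/- Let G be a group, n ≥ 0, let K be a G-set, let X be a set with commuting actions of G and of O(n), and let ρ : G → O(n) be a group homomorphism. Equip O(n) × K with the O(n)-action σ·(τ, k) := (στ, k) and the G-action g·(τ, k) := (τ ρ(g)⁻¹, g·k). Then: (i) these two actions on O(n) × K commute; (ii) there is a bijection between the set of maps α : O(n) × K → X that are simultaneously O(n)-equivariant and G-equivariant, and the set of maps β : K → X satisfying β(g·k) = ρ(g)·(g·β(k)) for all g ∈ G, k ∈ K; the bijection sends α to β(k) = α(1, k), with inverse sending β to α(τ, k) = τ·β(k). -/

import Mathlib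

/-!
An equivariant map `α : H × K → X` is determined by its restriction `β k = α (1, k)`, since
`α (τ, k) = τ • α (1, k)`. Writing `1 = ρ g * (ρ g)⁻¹` shows that `β` intertwines the action on `K`
with the action on `X` twisted by `ρ`; conversely `τ • β k` is `G`-equivariant for the twisted
action on `H × K` because `(ρ g)⁻¹` cancels the twist and the two actions on `X` commute.
-/

namespace TwistedAction

variable {G H K X : Type*} [Monoid G] [Group H] [MulAction G K] [MulAction G X] [MulAction H X]

def IsBiequivariant (ρ : G →* H) (α : H × K → X) : Prop :=
  (∀ σ τ k, α (σ * τ, k) = σ • α (τ, k)) ∧ ∀ g τ k, α (τ * (ρ g)⁻¹, g • k) = g • α (τ, k)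

def IsTwistedEquivariant (ρ : G →* H) (β : K → X) : Prop :=
  ∀ g k, β (g • k) = ρ g • (g • β k)

variable {ρ : G →* H}

theorem IsBiequivariant.apply_eq_smul_apply_one {α : H × K → X} (hα : IsBiequivariant ρ α)
    (τ : H) (k : K) : α (τ, k) = τ • α (1, k) := by
  simpa using hα.1 τ 1 k

theorem IsBiequivariant.isTwistedEquivariant_restrict {α : H × K → X}
    (hα : IsBiequivariant ρ α) : IsTwistedEquivariant ρ fun k => α (1, k) := by
  intro g k
  calc α (1, g • k) = α (ρ g * (1 * (ρ g)⁻¹), g • k) := by simp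
    _ = ρ g • (g • α (1, k)) := by rw [hα.1, hα.2]

theorem IsTwistedEquivariant.isBiequivariant_extend [SMulCommClass H G X] {β : K → X}
    (hβ : IsTwistedEquivariant ρ β) : IsBiequivariant ρ fun p : H × K => p.1 • β p.2 := by
  refine ⟨fun σ τ k => mul_smul σ τ _, fun g τ k => ?_⟩
  calc (τ * (ρ g)⁻¹) • β (g • k) = τ • (g • β k) := by rw [hβ, mul_smul, inv_smul_smul]
    _ = g • (τ • β k) := smul_comm τ g _

variable (ρ) in
def biequivariantEquivTwisted [SMulCommClass H G X] :
    {α : H × K → X // IsBiequivariant ρ α} ≃ {β : K → X // IsTwistedEquivariant ρ β} where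
  toFun α := ⟨fun k => α.1 (1, k), α.2.isTwistedEquivariant_restrict⟩
  invFun β := ⟨fun p => p.1 • β.1 p.2, β.2.isBiequivariant_extend⟩
  left_inv α := Subtype.ext <| funext fun p => (α.2.apply_eq_smul_apply_one p.1 p.2).symm
  right_inv β := Subtype.ext <| funext fun k => one_smul H (β.1 k)

end TwistedAction

/-- Let `K` be a `G`-set, `X` a set with commuting actions of `G` and
`O(n)`, and `ρ : G → O(n)`.  Equip `O(n) × K` with `σ • (τ, k) = (σ * τ, k)` and
`g • (τ, k) = (τ * (ρ g)⁻¹, g • k)`.  Then (i) these actions commute, and (ii) maps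
`α : O(n) × K → X` that are both `O(n)`- and `G`-equivariant correspond bijectively to
maps `β : K → X` with `β (g • k) = ρ g • (g • β k)`, via `β k = α (1, k)` and
`α (τ, k) = τ • β k`. -/
theorem free_spectrum_adjunction {G K X : Type*} [Group G] (n : ℕ) [MulAction G K]
    [MulAction G X] [MulAction (Matrix.orthogonalGroup (Fin n) ℝ) X]
    (hcomm : ∀ (σ : Matrix.orthogonalGroup (Fin n) ℝ) (g : G) (x : X),
      σ • (g • x) = g • (σ • x))
    (ρ : G →* Matrix.orthogonalGroup (Fin n) ℝ) :
    (∀ (σ : Matrix.orthogonalGroup (Fin n) ℝ) (g : G)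
       (τ : Matrix.orthogonalGroup (Fin n) ℝ) (k : K),
       (σ * (τ * (ρ g)⁻¹), g • k) = ((σ * τ) * (ρ g)⁻¹, g • k)) ∧
    ∃ e : {α : Matrix.orthogonalGroup (Fin n) ℝ × K → X //
            (∀ (σ τ : Matrix.orthogonalGroup (Fin n) ℝ) (k : K),
              α (σ * τ, k) = σ • α (τ, k)) ∧
            (∀ (g : G) (τ : Matrix.orthogonalGroup (Fin n) ℝ) (k : K),
              α (τ * (ρ g)⁻¹, g • k) = g • α (τ, k))} ≃
          {β : K → X // ∀ (g : G) (k : K), β (g • k) = ρ g • (g • β k)},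
      (∀ α (k : K), (e α).1 k = α.1 (1, k)) ∧
      (∀ β (τ : Matrix.orthogonalGroup (Fin n) ℝ) (k : K),
        (e.symm β).1 (τ, k) = τ • β.1 k) := by
  have : SMulCommClass (Matrix.orthogonalGroup (Fin n) ℝ) G X := ⟨hcomm⟩
  exact ⟨fun σ g τ k => by rw [mul_assoc], TwistedAction.biequivariantEquivTwisted ρ,
    fun _ _ => rfl, fun _ _ _ => rfl⟩
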